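/- Let ω, V ⊂ ℝⁿ be open domains and φ : ω → V a C² diffeomorphism. Let A : ω → Sym_n be a symmetric tensor whose entries are Radon measures, and define the push-forward tensor φ_*A over V by ⟨φ_*A, M⟩_V := ⟨dφᵀ A dφ, M∘φ⟩_ω for every M ∈ C_c(V; M_n(ℝ)). Then the row-wise divergence of φ_*A satisfies ⟨Div(φ_*A), Y⟩_V = ⟨(Div A) dφ + A : D²φ, Y∘φ⟩_ω for every Y ∈ D(V; ℝⁿ); here the i-th coordinate of (Div A) dφ + A : D²φ equals (Div A)·∇φ_i + Tr(A D²φ_i) = div(A ∇φ_i). -/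

import Mathlib

open MeasureTheory Metric Set Filter Topology
open scoped Pointwise ENNReal NNReal

noncomputable section

abbrev Euc (n : ℕ) := EuclideanSpace ℝ (Fin n)

/-- Integral of a real function against a signed measure. -/
def sInt {α : Type*} [MeasurableSpace α] (μ : MeasureTheory.SignedMeasure α) (f : α → ℝ) : ℝ :=
  ∫ x, f x ∂μ.toJordanDecomposition.posPart - ∫ x, f x ∂μ.toJordanDecomposition.negPart

/-- A signed measure is concentrated on the set `S`. -/
def SuppOn {α : Type*} [MeasurableSpace α] (μ : MeasureTheory.SignedMeasure α) (S : Set α) : Prop :=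
  ∀ t : Set α, MeasurableSet t → t ∩ S = ∅ → μ t = 0

/-- Total variation mass of a finite family of signed measures, seen as a vector measure,
via duality against continuous fields of pointwise Euclidean norm at most one. -/
def vmass {α : Type*} [MeasurableSpace α] [TopologicalSpace α] {ι : Type*} [Fintype ι]
    (g : ι → MeasureTheory.SignedMeasure α) : ℝ :=
  sSup { r | ∃ Y : ι → α → ℝ, (∀ i, Continuous (Y i)) ∧ (∀ x, ∑ i, (Y i x) ^ 2 ≤ 1) ∧
      r = ∑ i, sInt (g i) (Y i) }

/-- `j`-th partial derivative. -/
def pd {n : ℕ} (j : Fin n) (ψ : Euc n → ℝ) (x : Euc n) : ℝ :=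
  fderiv ℝ ψ x (EuclideanSpace.single j 1)

/-- Smooth test function compactly supported in `U`. -/
def IsTestFun {n : ℕ} (U : Set (Euc n)) (ψ : Euc n → ℝ) : Prop :=
  ContDiff ℝ (⊤ : ℕ∞) ψ ∧ HasCompactSupport ψ ∧ tsupport ψ ⊆ U

/-- A `C¹` function with compact support (representing an element of `C¹(Ū)`). -/
def IsC1 {n : ℕ} (Y : Euc n → ℝ) : Prop := ContDiff ℝ 1 Y ∧ HasCompactSupport Y

/-- A symmetric Div-BV tensor on `U`: the entries and the row-wise distributional
divergence are finite (signed) Radon measures carried by `U`. -/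
structure DivBV (n : ℕ) (U : Set (Euc n)) where
  A : Fin n → Fin n → MeasureTheory.SignedMeasure (Euc n)
  divA : Fin n → MeasureTheory.SignedMeasure (Euc n)
  symm : ∀ i j, A i j = A j i
  suppA : ∀ i j, SuppOn (A i j) U
  suppDiv : ∀ i, SuppOn (divA i) U
  weak : ∀ i, ∀ ψ : Euc n → ℝ, IsTestFun U ψ →
    ∑ j, sInt (A i j) (pd j ψ) = - sInt (divA i) ψ

/-- Positive semi-definiteness of a matrix of measures. -/
def DivBV.PSD {n : ℕ} {U : Set (Euc n)} (T : DivBV n U) : Prop :=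
  ∀ ξ : Fin n → ℝ, ∀ s : Set (Euc n), MeasurableSet s →
    0 ≤ ∑ i, ∑ j, ξ i * ξ j * (T.A i j) s

/-- Density (Radon–Nikodym derivative w.r.t. Lebesgue) of a signed measure. -/
def sdens {n : ℕ} (μ : MeasureTheory.SignedMeasure (Euc n)) (x : Euc n) : ℝ :=
  (μ.toJordanDecomposition.posPart.rnDeriv volume x).toReal -
  (μ.toJordanDecomposition.negPart.rnDeriv volume x).toReal

/-- Pointwise determinant of the absolutely continuous part of a Div-BV tensor. -/
def DivBV.detDens {n : ℕ} {U : Set (Euc n)} (T : DivBV n U) (x : Euc n) : ℝ :=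
  Matrix.det (Matrix.of fun i j => sdens (T.A i j) x)

/-- Total mass `‖A‖_{M(U)}` of the tensor. -/
def DivBV.massA {n : ℕ} {U : Set (Euc n)} (T : DivBV n U) : ℝ :=
  vmass (fun p : Fin n × Fin n => T.A p.1 p.2)

/-- Total mass `‖Div A‖_{M(U)}` of the divergence. -/
def DivBV.massDiv {n : ℕ} {U : Set (Euc n)} (T : DivBV n U) : ℝ :=
  vmass T.divA

/-- The pairing `⟨A, ∇Y⟩_U + ⟨Div A, Y⟩_U` defining the normal trace `γ_ν A`. -/
def DivBV.tracePair {n : ℕ} {U : Set (Euc n)} (T : DivBV n U) (Y : Fin n → Euc n → ℝ) : ℝ :=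
  (∑ i, ∑ j, sInt (T.A i j) (pd j (Y i))) + ∑ i, sInt (T.divA i) (Y i)

/-- The normal trace `γ_ν A` is represented by the vector-valued measure `g` on `∂U`. -/
def DivBV.TraceMeas {n : ℕ} {U : Set (Euc n)} (T : DivBV n U)
    (g : Fin n → MeasureTheory.SignedMeasure (Euc n)) : Prop :=
  (∀ i, SuppOn (g i) (frontier U)) ∧
  ∀ Y : Fin n → Euc n → ℝ, (∀ i, IsC1 (Y i)) →
    T.tracePair Y = ∑ i, sInt (g i) (Y i)

/-- The tangential part `γ_ν^τ A` of the normal trace is represented by the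
vector-valued measure `g` on `∂U` (with outer unit normal field `ν`): `g` is carried by `∂U`,
is tangential, and represents the trace pairing against all `C¹` fields tangential along `∂U`. -/
def DivBV.TangTraceMeas {n : ℕ} {U : Set (Euc n)} (T : DivBV n U) (ν : Euc n → Euc n)
    (g : Fin n → MeasureTheory.SignedMeasure (Euc n)) : Prop :=
  (∀ i, SuppOn (g i) (frontier U)) ∧
  (∀ φ : Euc n → ℝ, Continuous φ → ∑ i, sInt (g i) (fun x => φ x * ν x i) = 0) ∧
  ∀ Y : Fin n → Euc n → ℝ, (∀ i, IsC1 (Y i)) →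
    (∀ x ∈ frontier U, ∑ i, Y i x * ν x i = 0) →
    T.tracePair Y = ∑ i, sInt (g i) (Y i)

/-- A domain whose boundary is a `C^k` hypersurface, presented by a defining function. -/
structure CkDomain (n k : ℕ) (U : Set (Euc n)) where
  f : Euc n → ℝ
  O : Set (Euc n)
  opO : IsOpen O
  front : frontier U ⊆ O
  smooth : ContDiffOn ℝ k f O
  grad_ne : ∀ x ∈ frontier U, gradient f x ≠ 0
  neg : ∀ x ∈ O ∩ U, f x < 0
  pos : ∀ x ∈ O \ closure U, 0 < f x
  zero : ∀ x ∈ frontier U, f x = 0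

/-- The outer unit normal field (normalized gradient of the defining function). -/
def CkDomain.nu {n k : ℕ} {U : Set (Euc n)} (B : CkDomain n k U) (x : Euc n) : Euc n :=
  ‖gradient B.f x‖⁻¹ • gradient B.f x

/-- `L(Σ)`: the largest `L` such that every point at distance `< L` of `Σ` has a unique
nearest point on `Σ`. -/
def uniqRadius {n : ℕ} (S : Set (Euc n)) : ℝ :=
  sSup { L : ℝ | 0 ≤ L ∧ ∀ x : Euc n, infDist x S < L →
    ∃! a, a ∈ S ∧ dist x a = infDist x S }

open Classical in
/-- Nearest-point projection on `S` (junk value if no nearest point exists). -/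
def nearestPt {n : ℕ} (S : Set (Euc n)) (x : Euc n) : Euc n :=
  if h : ∃ a, a ∈ S ∧ dist x a = infDist x S then h.choose else x

/-- The geometric extension `ν ∘ π_Σ` of the unit normal to a tubular neighbourhood. -/
def CkDomain.nuGeo {n k : ℕ} {U : Set (Euc n)} (B : CkDomain n k U) (x : Euc n) : Euc n :=
  B.nu (nearestPt (frontier U) x)

/-- `K(Σ) = max (1/L(Σ), L(Σ) ‖D²ν‖_∞)`. -/
def CkDomain.Kconst {n k : ℕ} {U : Set (Euc n)} (B : CkDomain n k U) : ℝ :=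
  max (uniqRadius (frontier U))⁻¹
    (uniqRadius (frontier U) *
      sSup ((fun a => ‖fderiv ℝ (fderiv ℝ B.nuGeo) a‖) '' frontier U))

/-- The reflection `σ(x) = 2π_Σ(x) − x` across `Σ`. -/
def reflAcross {n : ℕ} (S : Set (Euc n)) (x : Euc n) : Euc n :=
  (2 : ℝ) • nearestPt S x - x


/-- Entry `(i, α)` of the Jacobian matrix `dφ`. -/
def dcomp {n : ℕ} (φ : Euc n → Euc n) (i α : Fin n) (x : Euc n) : ℝ :=
  fderiv ℝ φ x (EuclideanSpace.single α 1) i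

/-- Entry `(α, β)` of the Hessian `D²φ_i` of the `i`-th component of `φ`. -/
def d2comp {n : ℕ} (φ : Euc n → Euc n) (i α β : Fin n) (x : Euc n) : ℝ :=
  fderiv ℝ (fderiv ℝ φ) x (EuclideanSpace.single α 1) (EuclideanSpace.single β 1) i


/-!
The `i`-th coordinate of the identity is the weak divergence identity of `A`, row `α`, tested
against `ψ_α = ∂_α φ_i · (Y_i ∘ φ)`: by the chain rule
`∂_β ψ_α = ∂_β ∂_α φ_i · (Y_i ∘ φ) + ∑_j ∂_α φ_i ∂_β φ_j · (∂_j Y_i ∘ φ)`, and the symmetry of `A`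
turns the Hessian term into `A : D²φ_i`. The only difficulty is that `ψ_α` is merely `C¹`, and
only on `ω`, whereas `Div A` is defined by duality with smooth test functions. Since `φ⁻¹` is
continuous, `ψ_α` vanishes outside a compact subset of `ω`; a smooth cutoff equal to `1` there
makes it a global `C¹` function supported in `ω`, and mollifying it gives smooth test functions
whose values and first derivatives converge boundedly, so dominated convergence passes the weak
identity to the limit.
-/

open scoped Convolution Manifold

section SignedIntegral

variable {α : Type*} [MeasurableSpace α] {μ : SignedMeasure α} {S : Set α} {f g : α → ℝ}

def SIntegrable (μ : SignedMeasure α) (f : α → ℝ) : Prop :=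
  Integrable f μ.toJordanDecomposition.posPart ∧ Integrable f μ.toJordanDecomposition.negPart

theorem SuppOn.posPart_compl_eq_zero (h : SuppOn μ S) (hS : MeasurableSet S) :
    μ.toJordanDecomposition.posPart Sᶜ = 0 := by
  obtain ⟨i, hi, hpos_i, -, hpos, -⟩ := μ.toJordanDecomposition_spec
  rw [hpos, SignedMeasure.toMeasureOfZeroLE_apply _ hpos_i hi hS.compl]
  simp [h _ (hi.inter hS.compl) (by simp [inter_assoc])]

theorem SuppOn.negPart_compl_eq_zero (h : SuppOn μ S) (hS : MeasurableSet S) :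
    μ.toJordanDecomposition.negPart Sᶜ = 0 := by
  obtain ⟨i, hi, -, hneg_i, -, hneg⟩ := μ.toJordanDecomposition_spec
  rw [hneg, SignedMeasure.toMeasureOfLEZero_apply _ hneg_i hi.compl hS.compl]
  simp [h _ (hi.compl.inter hS.compl) (by simp [inter_assoc])]

theorem sInt_congr_of_suppOn (h : SuppOn μ S) (hS : MeasurableSet S) (hfg : EqOn f g S) :
    sInt μ f = sInt μ g := by
  have key : ∀ ν : Measure α, ν Sᶜ = 0 → ∫ x, f x ∂ν = ∫ x, g x ∂ν := fun ν hν =>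
    integral_congr_ae (measure_mono_null (fun x hx hxS => hx (hfg hxS)) hν)
  rw [sInt, sInt, key _ (h.posPart_compl_eq_zero hS), key _ (h.negPart_compl_eq_zero hS)]

theorem sInt_add (hf : SIntegrable μ f) (hg : SIntegrable μ g) :
    sInt μ (fun x => f x + g x) = sInt μ f + sInt μ g := by
  rw [sInt, sInt, sInt, integral_add hf.1 hg.1, integral_add hf.2 hg.2]
  ring

theorem sInt_sum {ι : Type*} [Fintype ι] {F : ι → α → ℝ} (hF : ∀ i, SIntegrable μ (F i)) :
    sInt μ (fun x => ∑ i, F i x) = ∑ i, sInt μ (F i) := by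
  rw [sInt, integral_finsetSum _ fun i _ => (hF i).1, integral_finsetSum _ fun i _ => (hF i).2,
    ← Finset.sum_sub_distrib]
  rfl

theorem SIntegrable.sum {ι : Type*} [Fintype ι] {F : ι → α → ℝ} (hF : ∀ i, SIntegrable μ (F i)) :
    SIntegrable μ (fun x => ∑ i, F i x) :=
  ⟨integrable_finsetSum _ fun i _ => (hF i).1, integrable_finsetSum _ fun i _ => (hF i).2⟩

theorem ContinuousOn.integrable_of_eq_zero_off_isCompact [TopologicalSpace α]
    [OpensMeasurableSpace α] {ν : Measure α} [IsFiniteMeasure ν] {K : Set α}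
    (hf : ContinuousOn f S) (hS : MeasurableSet S) (hν : ν Sᶜ = 0) (hK : IsCompact K)
    (hKS : K ⊆ S) (hf0 : ∀ x ∈ S, x ∉ K → f x = 0) : Integrable f ν := by
  have hae : ∀ᵐ x ∂ν, x ∈ S := hν
  obtain ⟨C, hC⟩ := hK.exists_bound_of_continuousOn (hf.mono hKS)
  refine ⟨?_, HasFiniteIntegral.of_bounded (C := max C 0) ?_⟩
  · rw [← Measure.restrict_eq_self_of_ae_mem hae]
    exact hf.aestronglyMeasurable hS
  · filter_upwards [hae] with x hx
    by_cases hxK : x ∈ K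
    · exact le_max_of_le_left (hC x hxK)
    · simp [hf0 x hx hxK]

theorem SuppOn.sIntegrable_of_continuousOn [TopologicalSpace α] [OpensMeasurableSpace α]
    {K : Set α} (hμ : SuppOn μ S) (hS : MeasurableSet S) (hf : ContinuousOn f S)
    (hK : IsCompact K) (hKS : K ⊆ S) (hf0 : ∀ x ∈ S, x ∉ K → f x = 0) : SIntegrable μ f :=
  ⟨hf.integrable_of_eq_zero_off_isCompact hS (hμ.posPart_compl_eq_zero hS) hK hKS hf0,
    hf.integrable_of_eq_zero_off_isCompact hS (hμ.negPart_compl_eq_zero hS) hK hKS hf0⟩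

theorem tendsto_sInt_of_bounded {F : ℕ → α → ℝ} {C : ℝ} (hF : ∀ k, Measurable (F k))
    (hC : ∀ k x, ‖F k x‖ ≤ C) (hlim : ∀ x, Tendsto (fun k => F k x) atTop (𝓝 (f x))) :
    Tendsto (fun k => sInt μ (F k)) atTop (𝓝 (sInt μ f)) := by
  refine Tendsto.sub ?_ ?_ <;>
    exact tendsto_integral_of_dominated_convergence (fun _ => C)
      (fun k => (hF k).aestronglyMeasurable) (integrable_const C)
      (fun k => .of_forall (hC k)) (.of_forall hlim)

end SignedIntegral

section PartialDerivatives

variable {n : ℕ}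

theorem apply_eq_sum_mul_apply_single (L : Euc n →L[ℝ] ℝ) (w : Euc n) :
    L w = ∑ j, w j * L (EuclideanSpace.single j 1) := by
  conv_lhs => rw [← (EuclideanSpace.basisFun (Fin n) ℝ).toBasis.sum_repr w]
  simp [map_sum]

theorem continuous_pd {ψ : Euc n → ℝ} (hψ : ContDiff ℝ 1 ψ) (j : Fin n) : Continuous (pd j ψ) :=
  (hψ.continuous_fderiv one_ne_zero).clm_apply continuous_const

theorem pd_of_notMem_tsupport {ψ : Euc n → ℝ} {x : Euc n} (hx : x ∉ tsupport ψ) (j : Fin n) :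
    pd j ψ x = 0 := by
  simp [pd, fderiv_of_notMem_tsupport ℝ hx]

theorem pd_mul {f g : Euc n → ℝ} {x : Euc n} (hf : DifferentiableAt ℝ f x)
    (hg : DifferentiableAt ℝ g x) (j : Fin n) :
    pd j (fun y => f y * g y) x = pd j f x * g x + f x * pd j g x := by
  rw [pd, pd, pd, fderiv_fun_mul hf hg]
  simp only [add_apply, smul_apply, smul_eq_mul]
  ring

theorem pd_comp {φ : Euc n → Euc n} {ψ : Euc n → ℝ} {x : Euc n}
    (hψ : DifferentiableAt ℝ ψ (φ x)) (hφ : DifferentiableAt ℝ φ x) (j : Fin n) :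
    pd j (fun y => ψ (φ y)) x = ∑ k, dcomp φ k j x * pd k ψ (φ x) := by
  rw [pd, show (fun y => ψ (φ y)) = ψ ∘ φ from rfl, fderiv_comp x hψ hφ,
    ContinuousLinearMap.comp_apply, apply_eq_sum_mul_apply_single]
  rfl

theorem dcomp_eq_comp (φ : Euc n → Euc n) (i α : Fin n) :
    dcomp φ i α = fun x => ((EuclideanSpace.proj i).comp
      (ContinuousLinearMap.apply ℝ (Euc n) (EuclideanSpace.single α 1))) (fderiv ℝ φ x) :=
  rfl

theorem pd_dcomp {φ : Euc n → Euc n} {x : Euc n} (hφ : DifferentiableAt ℝ (fderiv ℝ φ) x)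
    (i α β : Fin n) : pd β (dcomp φ i α) x = d2comp φ i β α x := by
  have h := (((EuclideanSpace.proj i).comp (ContinuousLinearMap.apply ℝ (Euc n)
    (EuclideanSpace.single α 1))).hasFDerivAt.comp x hφ.hasFDerivAt).fderiv
  rw [Function.comp_def] at h
  rw [pd, dcomp_eq_comp, h]
  rfl

theorem ContDiffOn.dcomp {φ : Euc n → Euc n} {ω : Set (Euc n)} {k m : WithTop ℕ∞}
    (hφ : ContDiffOn ℝ k φ ω) (hω : IsOpen ω) (hmk : m + 1 ≤ k) (i α : Fin n) :
    ContDiffOn ℝ m (dcomp φ i α) ω := by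
  rw [dcomp_eq_comp]
  exact (ContinuousLinearMap.contDiff _).comp_contDiffOn (hφ.fderiv_of_isOpen hω hmk)

theorem ContDiffOn.continuousOn_d2comp {φ : Euc n → Euc n} {ω : Set (Euc n)}
    (hφ : ContDiffOn ℝ 2 φ ω) (hω : IsOpen ω) (i α β : Fin n) :
    ContinuousOn (d2comp φ i α β) ω := by
  have hd2 : ContinuousOn (fderiv ℝ (fderiv ℝ φ)) ω :=
    (hφ.fderiv_of_isOpen hω le_rfl).continuousOn_fderiv_of_isOpen hω le_rfl
  exact (EuclideanSpace.proj i).continuous.comp_continuousOn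
    ((hd2.clm_apply continuousOn_const).clm_apply continuousOn_const)

end PartialDerivatives

section Mollification

def shrinkingBumps {X : Type*} (c : X) (δ : ℝ) (hδ : 0 < δ) (k : ℕ) : ContDiffBump c where
  rIn := δ / (k + 1) / 2
  rOut := δ / (k + 1)
  rIn_pos := by positivity
  rIn_lt_rOut := half_lt_self (by positivity)

theorem shrinkingBumps_rOut_le {X : Type*} (c : X) {δ : ℝ} (hδ : 0 < δ) (k : ℕ) :
    (shrinkingBumps c δ hδ k).rOut ≤ δ :=
  div_le_self hδ.le (by linarith [(k.cast_nonneg : (0 : ℝ) ≤ k)])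

theorem tendsto_shrinkingBumps_rOut {X : Type*} (c : X) {δ : ℝ} (hδ : 0 < δ) :
    Tendsto (fun k => (shrinkingBumps c δ hδ k).rOut) atTop (𝓝 0) := by
  simpa [shrinkingBumps, div_eq_mul_inv] using
    (tendsto_one_div_add_atTop_nhds_zero_nat (𝕜 := ℝ)).const_mul δ

variable {E : Type*} [NormedAddCommGroup E] [NormedSpace ℝ E] [FiniteDimensional ℝ E]
  [MeasurableSpace E] [BorelSpace E] {μ : Measure E} [μ.IsAddHaarMeasure]

theorem ContDiffBump.norm_normed_convolution_le (b : ContDiffBump (0 : E)) {g : E → ℝ} {C : ℝ}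
    (hg : AEStronglyMeasurable g μ) (hC : ∀ x, ‖g x‖ ≤ C) (x : E) :
    ‖(b.normed μ ⋆[ContinuousLinearMap.lsmul ℝ ℝ, μ] g) x‖ ≤ C := by
  simpa using dist_convolution_le (z₀ := (0 : ℝ)) ((norm_nonneg _).trans (hC x))
    b.support_normed_eq.subset b.nonneg_normed b.integral_normed hg
    (fun y _ => by simpa using hC y)

theorem ContDiffBump.tsupport_normed_convolution_subset (b : ContDiffBump (0 : E)) (g : E → ℝ) :
    tsupport (b.normed μ ⋆[ContinuousLinearMap.lsmul ℝ ℝ, μ] g) ⊆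
      cthickening b.rOut (tsupport g) := by
  refine closure_minimal ?_ isClosed_cthickening
  calc Function.support (b.normed μ ⋆[ContinuousLinearMap.lsmul ℝ ℝ, μ] g)
      ⊆ Function.support (b.normed μ) + Function.support g := support_convolution_subset _
    _ ⊆ ball 0 b.rOut + tsupport g := by
      rw [b.support_normed_eq]
      exact add_subset_add_left subset_closure
    _ = thickening b.rOut (tsupport g) := ball_add_zero _ _
    _ ⊆ cthickening b.rOut (tsupport g) := thickening_subset_cthickening _ _

theorem ContDiffBump.fderiv_normed_convolution_apply (b : ContDiffBump (0 : E)) {g : E → ℝ}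
    (hg : ContDiff ℝ 1 g) (hcs : HasCompactSupport g) (x v : E) :
    fderiv ℝ (b.normed μ ⋆[ContinuousLinearMap.lsmul ℝ ℝ, μ] g) x v =
      (b.normed μ ⋆[ContinuousLinearMap.lsmul ℝ ℝ, μ] fun y => fderiv ℝ g y v) x := by
  rw [(hcs.hasFDerivAt_convolution_right _ b.integrable_normed.locallyIntegrable hg x).fderiv,
    convolution_precompR_apply _ b.integrable_normed.locallyIntegrable (hcs.fderiv ℝ)
      (hg.continuous_fderiv one_ne_zero)]

theorem tendsto_sInt_normed_convolution (ν : SignedMeasure E) {b : ℕ → ContDiffBump (0 : E)}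
    (hb : Tendsto (fun k => (b k).rOut) atTop (𝓝 0)) {g : E → ℝ} (hg : Continuous g)
    (hcs : HasCompactSupport g) :
    Tendsto (fun k => sInt ν ((b k).normed μ ⋆[ContinuousLinearMap.lsmul ℝ ℝ, μ] g)) atTop
      (𝓝 (sInt ν g)) := by
  obtain ⟨C, hC⟩ := hcs.exists_bound_of_continuous hg
  exact tendsto_sInt_of_bounded
    (fun k => ((b k).hasCompactSupport_normed.continuous_convolution_left _
      (b k).continuous_normed hg.locallyIntegrable).measurable)
    (fun k => (b k).norm_normed_convolution_le hg.aestronglyMeasurable hC)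
    (fun x => ContDiffBump.convolution_tendsto_right_of_continuous hb hg x)

end Mollification

theorem IsCompact.exists_contDiff_eqOn_one {E : Type*} [NormedAddCommGroup E] [NormedSpace ℝ E]
    [FiniteDimensional ℝ E] {K U : Set E} (hK : IsCompact K) (hU : IsOpen U) (hKU : K ⊆ U) :
    ∃ χ : E → ℝ, ContDiff ℝ (⊤ : ℕ∞) χ ∧ HasCompactSupport χ ∧ tsupport χ ⊆ U ∧ EqOn χ 1 K := by
  obtain ⟨δ, hδ, hδU⟩ := hK.exists_cthickening_subset_open hU hKU
  obtain ⟨χ, hχ0, hχ1, -⟩ := exists_contMDiffMap_zero_one_of_isClosed 𝓘(ℝ, E) (n := (⊤ : ℕ∞))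
    isOpen_thickening.isClosed_compl hK.isClosed
    (disjoint_compl_left_iff_subset.2 (self_subset_thickening hδ K))
  have hsupp : Function.support χ ⊆ thickening δ K := fun x hx => by
    by_contra h
    exact hx (hχ0 h)
  have hts : tsupport χ ⊆ cthickening δ K :=
    (closure_mono hsupp).trans (closure_thickening_subset_cthickening δ K)
  exact ⟨χ, contMDiff_iff_contDiff.1 χ.contMDiff,
    hK.cthickening.of_isClosed_subset (isClosed_tsupport _) hts, hts.trans hδU, hχ1⟩

section WeakDivergence

variable {n : ℕ} {ω : Set (Euc n)}

theorem DivBV.weak_of_contDiff (hω : IsOpen ω) (T : DivBV n ω) (α : Fin n) {ψ : Euc n → ℝ}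
    (hψ : ContDiff ℝ 1 ψ) (hcs : HasCompactSupport ψ) (hts : tsupport ψ ⊆ ω) :
    ∑ β, sInt (T.A α β) (pd β ψ) = - sInt (T.divA α) ψ := by
  obtain ⟨δ, hδ, hδω⟩ := hcs.isCompact.exists_cthickening_subset_open hω hts
  set b := shrinkingBumps (0 : Euc n) δ hδ
  have hb := tendsto_shrinkingBumps_rOut (0 : Euc n) hδ
  set ψk := fun k => (b k).normed volume ⋆[ContinuousLinearMap.lsmul ℝ ℝ, volume] ψ
  have htest : ∀ k, IsTestFun ω (ψk k) := fun k =>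
    ⟨(b k).hasCompactSupport_normed.contDiff_convolution_left _ (b k).contDiff_normed
        hψ.continuous.locallyIntegrable,
      (b k).hasCompactSupport_normed.convolution _ hcs,
      ((b k).tsupport_normed_convolution_subset ψ).trans
        ((cthickening_mono (shrinkingBumps_rOut_le _ hδ k) _).trans hδω)⟩
  have hpd : ∀ k β, pd β (ψk k) =
      (b k).normed volume ⋆[ContinuousLinearMap.lsmul ℝ ℝ, volume] pd β ψ := fun k β =>
    funext fun x => (b k).fderiv_normed_convolution_apply hψ hcs x _
  refine tendsto_nhds_unique (f := fun k => ∑ β, sInt (T.A α β) (pd β (ψk k))) (l := atTop) ?_ ?_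
  · simp only [hpd]
    exact tendsto_finsetSum _ fun β _ =>
      tendsto_sInt_normed_convolution _ hb (continuous_pd hψ β) (hcs.fderiv_apply ℝ _)
  · simp only [fun k => T.weak α _ (htest k)]
    exact (tendsto_sInt_normed_convolution _ hb hψ.continuous hcs).neg

theorem DivBV.weak_of_contDiffOn (hω : IsOpen ω) (T : DivBV n ω) (α : Fin n) {ψ : Euc n → ℝ}
    {K : Set (Euc n)} (hψ : ContDiffOn ℝ 1 ψ ω) (hK : IsCompact K) (hKω : K ⊆ ω)
    (hψK : ∀ x ∈ ω, x ∉ K → ψ x = 0) :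
    ∑ β, sInt (T.A α β) (pd β ψ) = - sInt (T.divA α) ψ := by
  obtain ⟨χ, hχ, hχcs, hχω, hχK⟩ := hK.exists_contDiff_eqOn_one hω hKω
  have hEq : EqOn (fun x => χ x * ψ x) ψ ω := fun x hx => by
    by_cases hxK : x ∈ K
    · simp [hχK hxK]
    · simp [hψK x hx hxK]
  have hpd : ∀ β, EqOn (pd β (fun x => χ x * ψ x)) (pd β ψ) ω := fun β x hx => by
    simp only [pd, (hEq.eventuallyEq_of_mem (hω.mem_nhds hx)).fderiv_eq]
  have hC1 : ContDiff ℝ 1 (fun x => χ x * ψ x) := by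
    refine contDiff_iff_contDiffAt.2 fun x => ?_
    by_cases hx : x ∈ ω
    · exact (hχ.of_le (by exact_mod_cast le_top)).contDiffAt.mul
        (hψ.contDiffAt (hω.mem_nhds hx))
    · have hxχ : χ =ᶠ[𝓝 x] 0 := notMem_tsupport_iff_eventuallyEq.1 fun h => hx (hχω h)
      exact (contDiffAt_const (c := (0 : ℝ))).congr_of_eventuallyEq
        (hxχ.mono fun y (hy : χ y = 0) => by simp [hy])
  have h := T.weak_of_contDiff hω α hC1 hχcs.mul_right
    ((tsupport_mul_subset_left).trans hχω)
  rwa [sInt_congr_of_suppOn (T.suppDiv α) hω.measurableSet hEq, Finset.sum_congr rfl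
    fun β _ => sInt_congr_of_suppOn (T.suppA α β) hω.measurableSet (hpd β)] at h

end WeakDivergence

theorem IsCompact.exists_isCompact_superset_preimage {X Y : Type*} [TopologicalSpace X]
    [TopologicalSpace Y] {φ : X → Y} {φinv : Y → X} {ω : Set X} {V : Set Y} {S : Set Y}
    (hS : IsCompact S) (hSV : S ⊆ V) (hsurj : SurjOn φ ω V) (hφinv : ContinuousOn φinv V)
    (hleft : LeftInvOn φinv φ ω) :
    ∃ K, IsCompact K ∧ K ⊆ ω ∧ ∀ x ∈ ω, φ x ∈ S → x ∈ K := by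
  refine ⟨φinv '' S, hS.image_of_continuousOn (hφinv.mono hSV), ?_,
    fun x hx hxS => ⟨φ x, hxS, hleft hx⟩⟩
  rintro _ ⟨y, hy, rfl⟩
  obtain ⟨x, hx, rfl⟩ := hsurj (hSV hy)
  rwa [hleft hx]

section PushForward

variable {n : ℕ} {ω : Set (Euc n)} {φ : Euc n → Euc n} {y : Euc n → ℝ}

theorem pd_dcomp_mul_comp {x : Euc n} (hφ : ContDiffAt ℝ 2 φ x) (hy : DifferentiableAt ℝ y (φ x))
    (i α β : Fin n) :
    pd β (fun x => dcomp φ i α x * y (φ x)) x =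
      d2comp φ i β α x * y (φ x) + ∑ j, dcomp φ i α x * dcomp φ j β x * pd j y (φ x) := by
  have hdφ : DifferentiableAt ℝ (fderiv ℝ φ) x :=
    (hφ.fderiv_right (m := 1) (by norm_num)).differentiableAt one_ne_zero
  have hφx : DifferentiableAt ℝ φ x := hφ.differentiableAt (by norm_num)
  have hdcomp : DifferentiableAt ℝ (dcomp φ i α) x := by
    rw [dcomp_eq_comp]
    exact (ContinuousLinearMap.differentiableAt _).comp x hdφ
  rw [pd_mul (g := fun x => y (φ x)) hdcomp (hy.comp x hφx), pd_dcomp hdφ, pd_comp hy hφx,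
    Finset.mul_sum]
  simp only [mul_assoc]

theorem DivBV.sInt_divA_dcomp_mul_comp (hω : IsOpen ω) (T : DivBV n ω) (hφ : ContDiffOn ℝ 2 φ ω)
    (hy : ContDiff ℝ 1 y) {K : Set (Euc n)} (hK : IsCompact K) (hKω : K ⊆ ω)
    (hyK : ∀ x ∈ ω, φ x ∈ tsupport y → x ∈ K) (i α : Fin n) :
    sInt (T.divA α) (fun x => dcomp φ i α x * y (φ x)) =
      -∑ β, (sInt (T.A α β) (fun x => d2comp φ i β α x * y (φ x)) +
        ∑ j, sInt (T.A α β) (fun x => dcomp φ i α x * dcomp φ j β x * pd j y (φ x))) := by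
  have hout : ∀ x ∈ ω, x ∉ K → φ x ∉ tsupport y := fun x hx hxK h => hxK (hyK x hx h)
  have hintegrable : ∀ {f : Euc n → ℝ}, ContinuousOn f ω → (∀ x ∈ ω, x ∉ K → f x = 0) →
      ∀ β, SIntegrable (T.A α β) f := fun hf hf0 β =>
    (T.suppA α β).sIntegrable_of_continuousOn hω.measurableSet hf hK hKω hf0
  have hdcomp : ∀ j β, ContDiffOn ℝ 1 (dcomp φ j β) ω := fun j β =>
    hφ.dcomp hω (by norm_num) j β
  have hyφ : ContDiffOn ℝ 1 (fun x => y (φ x)) ω :=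
    hy.comp_contDiffOn (hφ.of_le (by norm_num))
  have hpdyφ : ∀ j, ContinuousOn (fun x => pd j y (φ x)) ω := fun j =>
    (continuous_pd hy j).comp_continuousOn hφ.continuousOn
  have hpd : ∀ β, EqOn (pd β (fun x => dcomp φ i α x * y (φ x)))
      (fun x => d2comp φ i β α x * y (φ x) +
        ∑ j, dcomp φ i α x * dcomp φ j β x * pd j y (φ x)) ω := fun β x hx =>
    pd_dcomp_mul_comp (hφ.contDiffAt (hω.mem_nhds hx))
      (hy.differentiable one_ne_zero _) i α β
  rw [← neg_eq_iff_eq_neg, ← T.weak_of_contDiffOn hω α ((hdcomp i α).mul hyφ) hK hKω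
    (fun x hx hxK => by simp [image_eq_zero_of_notMem_tsupport (hout x hx hxK)])]
  refine Finset.sum_congr rfl fun β _ => ?_
  have hterm : ∀ j, SIntegrable (T.A α β)
      (fun x => dcomp φ i α x * dcomp φ j β x * pd j y (φ x)) := fun j =>
    hintegrable (((hdcomp i α).continuousOn.mul (hdcomp j β).continuousOn).mul (hpdyφ j))
      (fun x hx hxK => by simp [pd_of_notMem_tsupport (hout x hx hxK)]) β
  have hd2 : SIntegrable (T.A α β) (fun x => d2comp φ i β α x * y (φ x)) :=
    hintegrable ((hφ.continuousOn_d2comp hω i β α).mul hyφ.continuousOn)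
      (fun x hx hxK => by simp [image_eq_zero_of_notMem_tsupport (hout x hx hxK)]) β
  rw [sInt_congr_of_suppOn (T.suppA α β) hω.measurableSet (hpd β),
    sInt_add hd2 (SIntegrable.sum hterm), sInt_sum hterm]

theorem DivBV.sum_sInt_divA_add_sum_sInt_d2comp (hω : IsOpen ω) (T : DivBV n ω)
    (hφ : ContDiffOn ℝ 2 φ ω) (hy : ContDiff ℝ 1 y) {K : Set (Euc n)} (hK : IsCompact K)
    (hKω : K ⊆ ω) (hyK : ∀ x ∈ ω, φ x ∈ tsupport y → x ∈ K) (i : Fin n) :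
    (∑ α, sInt (T.divA α) (fun x => dcomp φ i α x * y (φ x))) +
      ∑ α, ∑ β, sInt (T.A α β) (fun x => d2comp φ i α β x * y (φ x)) =
    -∑ j, ∑ α, ∑ β, sInt (T.A α β)
      (fun x => dcomp φ i α x * dcomp φ j β x * pd j y (φ x)) := by
  have hsymm : ∑ α, ∑ β, sInt (T.A α β) (fun x => d2comp φ i α β x * y (φ x)) =
      ∑ α, ∑ β, sInt (T.A α β) (fun x => d2comp φ i β α x * y (φ x)) := by
    rw [Finset.sum_comm]
    exact Finset.sum_congr rfl fun α _ => Finset.sum_congr rfl fun β _ => by rw [T.symm]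
  have hswap : ∑ j, ∑ α, ∑ β, sInt (T.A α β)
      (fun x => dcomp φ i α x * dcomp φ j β x * pd j y (φ x)) =
      ∑ α, ∑ β, ∑ j, sInt (T.A α β)
      (fun x => dcomp φ i α x * dcomp φ j β x * pd j y (φ x)) := by
    rw [Finset.sum_comm]
    exact Finset.sum_congr rfl fun α _ => Finset.sum_comm
  simp only [T.sInt_divA_dcomp_mul_comp hω hφ hy hK hKω hyK i, hsymm, hswap,
    Finset.sum_neg_distrib, Finset.sum_add_distrib]
  ring

end PushForward

theorem stmt6_general (n : ℕ) (ω V : Set (Euc n)) (hω : IsOpen ω)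
    (φ φinv : Euc n → Euc n)
    (hφ : ContDiffOn ℝ 2 φ ω) (hbij : Set.BijOn φ ω V)
    (hφinv : ContDiffOn ℝ 2 φinv V) (hleft : ∀ x ∈ ω, φinv (φ x) = x)
    (T : DivBV n ω)
    (Y : Fin n → Euc n → ℝ) (hY : ∀ i, IsTestFun V (Y i)) :
    -(∑ i, ∑ j, ∑ α, ∑ β, sInt (T.A α β)
        (fun x => dcomp φ i α x * dcomp φ j β x * pd j (Y i) (φ x))) =
    ∑ i, ((∑ α, sInt (T.divA α) (fun x => dcomp φ i α x * Y i (φ x))) +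
      ∑ α, ∑ β, sInt (T.A α β) (fun x => d2comp φ i α β x * Y i (φ x))) := by
  rw [← Finset.sum_neg_distrib]
  refine Finset.sum_congr rfl fun i _ => ?_
  obtain ⟨hYsmooth, hYcompact, hYV⟩ := hY i
  obtain ⟨K, hK, hKω, hYK⟩ := hYcompact.isCompact.exists_isCompact_superset_preimage hYV
    hbij.surjOn hφinv.continuousOn hleft
  exact (T.sum_sInt_divA_add_sum_sInt_d2comp hω hφ (hYsmooth.of_le (by exact_mod_cast le_top))
    hK hKω hYK i).symm

/-- Lemma 2.1 of the paper: formula for the distributional divergence of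
the push-forward tensor `φ_*A`, namely
`⟨Div (φ_*A), Y⟩_V = ⟨(Div A) dφ + A : D²φ, Y ∘ φ⟩_ω` for every test field `Y ∈ D(V; ℝⁿ)`. -/
theorem stmt6 (n : ℕ) (ω V : Set (Euc n)) (hω : IsOpen ω) (hV : IsOpen V)
    (φ φinv : Euc n → Euc n)
    (hφ : ContDiffOn ℝ 2 φ ω) (hbij : Set.BijOn φ ω V)
    (hφinv : ContDiffOn ℝ 2 φinv V) (hleft : ∀ x ∈ ω, φinv (φ x) = x)
    (hright : ∀ y ∈ V, φ (φinv y) = y)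
    (T : DivBV n ω)
    (Y : Fin n → Euc n → ℝ) (hY : ∀ i, IsTestFun V (Y i)) :
    -(∑ i, ∑ j, ∑ α, ∑ β, sInt (T.A α β)
        (fun x => dcomp φ i α x * dcomp φ j β x * pd j (Y i) (φ x))) =
    ∑ i, ((∑ α, sInt (T.divA α) (fun x => dcomp φ i α x * Y i (φ x))) +
      ∑ α, ∑ β, sInt (T.A α β) (fun x => d2comp φ i α β x * Y i (φ x))) :=
  stmt6_general n ω V hω φ φinv hφ hbij hφinv hleft T Y hY
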